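/- Let G be a group of type Φ_k and let (P_i)_{i∈I} be any family of projective kG-modules. Then the direct product ∏_{i∈I} P_i has finite projective dimension over kG. -/

import Mathlib

/-!
Background definitions.

Throughout, for a commutative ring `k` and a group `G`, the group algebra `kG` is
`MonoidAlgebra k G`, and `kG`-modules are (possibly infinitely generated) modules over
`MonoidAlgebra k G`.
-/

universe u v

open scoped TensorProduct DirectSum

/-- `M` has projective dimension at most `n` over `R` (i.e. it admits a projective
resolution of length at most `n`). -/
def HasProjDimLE (R : Type u) [Ring R] :
    (n : ℕ) → (M : Type v) → [AddCommMonoid M] → [Module R M] → Prop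
  | 0, M, _, _ => Module.Projective R M
  | n + 1, M, _, _ =>
    ∃ (P : Type v) (_ : AddCommMonoid P) (_ : Module R P) (f : P →ₗ[R] M),
      Module.Projective R P ∧ Function.Surjective f ∧
        HasProjDimLE R n (LinearMap.ker f)

/-- `M` has finite projective dimension over `R`. -/
def HasFinProjDim (R : Type u) [Ring R] (M : Type v) [AddCommMonoid M] [Module R M] : Prop :=
  ∃ n, HasProjDimLE R n M

/-- The global dimension of `R` is at most `d` : every `R`-module has projective dimension
at most `d`. -/
def GlobalDimLE (R : Type u) [Ring R] (d : ℕ) : Prop :=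
  ∀ (M : Type u) (_ : AddCommMonoid M) (_ : Module R M), HasProjDimLE R d M

section GroupAlgebra

variable (k : Type u) [CommRing k] (G : Type u) [Group G]

/-- The canonical ring homomorphism `kF → kG` induced by the inclusion of a subgroup `F ≤ G`. -/
noncomputable def subgroupInclusion (F : Subgroup G) :
    MonoidAlgebra k F →+* MonoidAlgebra k G :=
  MonoidAlgebra.mapDomainRingHom k F.subtype

/-- The restriction of a `kG`-module `M` to a `kF`-module, for a subgroup `F ≤ G`. -/
noncomputable def restrictToSubgroup (F : Subgroup G) (M : Type u) [AddCommMonoid M]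
    [Module (MonoidAlgebra k G) M] : Module (MonoidAlgebra k F) M :=
  Module.compHom M (subgroupInclusion k G F)

/-- A group `G` is of type `Φ_k` if a `kG`-module has finite projective dimension over `kG`
if and only if its restriction to every finite subgroup `F ≤ G` has finite projective
dimension over `kF`. -/
def IsTypePhi : Prop :=
  ∀ (M : Type u) (_ : AddCommMonoid M) (_ : Module (MonoidAlgebra k G) M),
    HasFinProjDim (MonoidAlgebra k G) M ↔
      ∀ (F : Subgroup G), Finite F →
        letI := restrictToSubgroup k G F M
        HasFinProjDim (MonoidAlgebra k F) M

/-- The finitistic dimension of `kG` is at most `b` : every `kG`-module of finite projective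
dimension has projective dimension at most `b`. -/
def FindimLE (b : ℕ) : Prop :=
  ∀ (M : Type u) (_ : AddCommMonoid M) (_ : Module (MonoidAlgebra k G) M),
    HasFinProjDim (MonoidAlgebra k G) M → HasProjDimLE (MonoidAlgebra k G) b M

/-- The trivial representation of `G` on `k`. -/
noncomputable abbrev trivRep : Representation k G k :=
  Representation.trivial k (G := G) (V := k)

/-- The trivial `kG`-module `k`. -/
noncomputable abbrev Triv : Type u := (trivRep k G).asModule

/-- `kG ⊗_{kH} k`, the module induced from the trivial `kH`-module `k`, realised as the
quotient of `kG` by the left submodule generated by `{h - 1 : h ∈ H}`, i.e. by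
`kG · I_H` where `I_H` is the augmentation ideal of `kH`. -/
noncomputable def IndTriv (H : Subgroup G) : Type u :=
  MonoidAlgebra k G ⧸ Submodule.span (MonoidAlgebra k G)
    {x : MonoidAlgebra k G | ∃ h ∈ H, x = MonoidAlgebra.of k G h - 1}

noncomputable instance (H : Subgroup G) : AddCommGroup (IndTriv k G H) :=
  inferInstanceAs (AddCommGroup (MonoidAlgebra k G ⧸ _))

noncomputable instance (H : Subgroup G) : Module (MonoidAlgebra k G) (IndTriv k G H) :=
  inferInstanceAs (Module (MonoidAlgebra k G) (MonoidAlgebra k G ⧸ _))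

/-- The restriction of the `kG`-module `M` to the subgroup `H ≤ G` is projective over `kH`. -/
noncomputable def RestrictionProjective (H : Subgroup G) (M : Type u) [AddCommMonoid M]
    [Module (MonoidAlgebra k G) M] : Prop :=
  letI := restrictToSubgroup k G H M
  Module.Projective (MonoidAlgebra k H) M

/-- `M` is a `kG`-lattice, i.e. `M` is projective as a `k`-module (where the `k`-module
structure is obtained by restricting scalars along `k → kG`). -/
noncomputable def IsLatticeModule (M : Type u) [AddCommMonoid M]
    [Module (MonoidAlgebra k G) M] : Prop :=
  letI : Module k M := Module.compHom M (algebraMap k (MonoidAlgebra k G))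
  Module.Projective k M

/-- `kG`, viewed as a left `kH`-module via left multiplication, for a subgroup `H ≤ G`. -/
noncomputable instance (H : Subgroup G) : Module (MonoidAlgebra k H) (MonoidAlgebra k G) :=
  Module.compHom _ (subgroupInclusion k G H)

/-- Right multiplication by `a : kG` as a `kH`-linear endomorphism of `kG`. -/
noncomputable def rightMulHom (H : Subgroup G) (a : MonoidAlgebra k G) :
    MonoidAlgebra k G →ₗ[MonoidAlgebra k H] MonoidAlgebra k G where
  toFun x := x * a
  map_add' x y := add_mul x y a
  map_smul' b x := by
    show (subgroupInclusion k G H b * x) * a = subgroupInclusion k G H b * (x * a)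
    rw [mul_assoc]

/-- The `kG`-module structure on the coinduced module `Coind^G_H N = Hom_{kH}(kG, N)`
(where `kG` is a left `kH`-module via left multiplication), given by `(a • φ) x = φ (x * a)`;
for `a = g ∈ G` this is `(g • φ) x = φ (x * g)`. -/
noncomputable instance coindModule (H : Subgroup G) (N : Type u) [AddCommGroup N]
    [Module (MonoidAlgebra k H) N] :
    Module (MonoidAlgebra k G) (MonoidAlgebra k G →ₗ[MonoidAlgebra k H] N) where
  smul a φ := LinearMap.comp φ (rightMulHom k G H a)
  one_smul φ := LinearMap.ext fun x => by
    show φ (x * 1) = φ x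
    rw [mul_one]
  mul_smul a b φ := LinearMap.ext fun x => by
    show φ (x * (a * b)) = φ ((x * a) * b)
    rw [mul_assoc]
  smul_zero a := LinearMap.ext fun x => rfl
  smul_add a φ ψ := LinearMap.ext fun x => rfl
  add_smul a b φ := LinearMap.ext fun x => by
    show φ (x * (a + b)) = φ (x * a) + φ (x * b)
    rw [mul_add, map_add]
  zero_smul φ := LinearMap.ext fun x => by
    show φ (x * 0) = 0
    rw [mul_zero, map_zero]

/-- The representation of `G` on the `k`-module of all functions `G → Y`, with
`(g • φ) x = φ (x * g)`; this is the module coinduced from the trivial subgroup,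
`Coind^G_1 Y = Hom_k(kG, Y)`. -/
noncomputable def coindTrivRep (Y : Type u) [AddCommGroup Y] [Module k Y] :
    Representation k G (G → Y) where
  toFun g :=
    { toFun := fun φ x => φ (x * g)
      map_add' := fun φ ψ => rfl
      map_smul' := fun r φ => rfl }
  map_one' := by ext φ x; simp
  map_mul' g h := by ext φ x; simp [mul_assoc]

end GroupAlgebra

/-- `C` is a direct summand of `S` as an `R`-module. -/
def IsSummandOf (R : Type u) [Ring R] (C : Type v) (S : Type v) [AddCommMonoid C] [Module R C]
    [AddCommMonoid S] [Module R S] : Prop :=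
  ∃ (i : C →ₗ[R] S) (p : S →ₗ[R] C), p.comp i = LinearMap.id

/-- An `R`-module is Gorenstein projective if it is (isomorphic to) a kernel of a
differential in a totally acyclic `ℤ`-indexed chain complex of projective `R`-modules,
i.e. an everywhere-exact complex `P_*` of projectives such that `Hom_R(P_*, Q)` is
everywhere exact for every projective `R`-module `Q`. -/
def IsGorensteinProjective (R : Type u) [Ring R] (M : Type u) [AddCommMonoid M]
    [Module R M] : Prop :=
  ∃ (P : ℤ → Type u) (_ : ∀ i, AddCommMonoid (P i)) (_ : ∀ i, Module R (P i))
    (d : ∀ i : ℤ, P (i + 1) →ₗ[R] P i),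
      (∀ i, Module.Projective R (P i)) ∧
      (∀ i : ℤ, Function.Exact (d (i + 1)) (d i)) ∧
      (∀ (Q : Type u) (_ : AddCommMonoid Q) (_ : Module R Q), Module.Projective R Q →
        ∀ i : ℤ, Function.Exact (fun f : P i →ₗ[R] Q => f.comp (d i))
          (fun f : P (i + 1) →ₗ[R] Q => f.comp (d (i + 1)))) ∧
      ∃ i : ℤ, Nonempty (M ≃ₗ[R] LinearMap.ker (d i))

/-- `A` is an `n`-th syzygy of `M` : there is an exact sequence
`0 → A → P_{n-1} → ⋯ → P_0 → M → 0` with all `P_i` projective (for `n = 0` read `A ≅ M`). -/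
def IsSyzygy (R : Type u) [Ring R] :
    (n : ℕ) → (A : Type u) → [AddCommMonoid A] → [Module R A] →
      (M : Type u) → [AddCommMonoid M] → [Module R M] → Prop
  | 0, A, _, _, M, _, _ => Nonempty (A ≃ₗ[R] M)
  | n + 1, A, _, _, M, _, _ =>
    ∃ (P : Type u) (_ : AddCommMonoid P) (_ : Module R P) (f : P →ₗ[R] M),
      Module.Projective R P ∧ Function.Surjective f ∧ IsSyzygy R n A (LinearMap.ker f)

/-- Two `R`-modules `M` and `N` are stably isomorphic : for some `n ≥ 0` there are `n`-th
syzygies `A` of `M` and `B` of `N`, and projective modules `P`, `Q`, with `A ⊕ P ≅ B ⊕ Q`. -/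
def StablyIsomorphic (R : Type u) [Ring R] (M : Type u) [AddCommMonoid M] [Module R M]
    (N : Type u) [AddCommMonoid N] [Module R N] : Prop :=
  ∃ (n : ℕ) (A B : Type u) (_ : AddCommMonoid A) (_ : Module R A)
    (_ : AddCommMonoid B) (_ : Module R B),
      IsSyzygy R n A M ∧ IsSyzygy R n B N ∧
      ∃ (P Q : Type u) (_ : AddCommMonoid P) (_ : Module R P) (_ : AddCommMonoid Q)
        (_ : Module R Q), Module.Projective R P ∧ Module.Projective R Q ∧
          Nonempty ((A × P) ≃ₗ[R] (B × Q))

/-- A homomorphism `f : A → B` of `R`-modules is a stable isomorphism : there are a projective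
module `P` and a surjection `π : P → B` such that the kernel of the combined map
`(f, π) : A ⊕ P → B` has finite projective dimension. -/
def IsStableIso (R : Type u) [Ring R] {A B : Type u} [AddCommMonoid A] [Module R A]
    [AddCommMonoid B] [Module R B] (f : A →ₗ[R] B) : Prop :=
  ∃ (P : Type u) (_ : AddCommMonoid P) (_ : Module R P) (π : P →ₗ[R] B),
    Module.Projective R P ∧ Function.Surjective π ∧
      HasFinProjDim R (LinearMap.ker (LinearMap.coprod f π))

section Equivariant

variable {k G V W : Type u} [CommRing k] [Group G]
  [AddCommGroup V] [Module k V] [AddCommGroup W] [Module k W]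

/-- A `G`-equivariant `k`-linear map between representations induces a homomorphism of the
corresponding modules over the group algebra `MonoidAlgebra k G`. -/
noncomputable def eqvToModule (ρ : Representation k G V) (σ : Representation k G W)
    (f : V →ₗ[k] W) (hf : ∀ (g : G) (v : V), f (ρ g v) = σ g (f v)) :
    ρ.asModule →ₗ[MonoidAlgebra k G] σ.asModule where
  toFun v := f v
  map_add' := f.map_add
  map_smul' a v := by
    show f (ρ.asAlgebraHom a v) = σ.asAlgebraHom a (f v)
    induction a using MonoidAlgebra.induction_on with
    | of g => simp [Representation.asAlgebraHom_of]; exact hf g v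
    | add a b ha hb =>
      simp only [map_add]
      first
        | erw [LinearMap.add_apply, map_add, ha, hb]
        | exact (congrArg _ (LinearMap.add_apply _ _ _)).trans
            ((map_add _ _ _).trans (congrArg₂ (· + ·) ha hb))
      rfl
    | smul r a ha =>
      simp only [map_smul]
      first
        | erw [LinearMap.smul_apply, map_smul, ha]
        | exact (congrArg _ (LinearMap.smul_apply _ _ _)).trans
            ((map_smul _ _ _).trans (congrArg (r • ·) ha))
      rfl

theorem eval_equivariant (ρ : Representation k G V) (g : G) (v : V) :
    Module.Dual.eval k V (ρ g v) = ρ.dual.dual g (Module.Dual.eval k V v) := by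
  ext φ
  simp [Representation.dual_apply, Module.Dual.transpose_apply]

/-- The natural map `M → M**` as a homomorphism of `kG`-modules. -/
noncomputable def evalHomG (ρ : Representation k G V) :
    ρ.asModule →ₗ[MonoidAlgebra k G] ρ.dual.dual.asModule :=
  eqvToModule ρ ρ.dual.dual (Module.Dual.eval k V) (eval_equivariant ρ)

theorem ev_equivariant (ρ : Representation k G V) (g : G) (z : V ⊗[k] Module.Dual k V) :
    contractRight k V ((ρ.tprod ρ.dual) g z) =
      trivRep k G g (contractRight k V z) := by
  induction z using TensorProduct.induction_on with
  | zero => simp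
  | tmul m φ =>
      simp [Representation.tprod_apply, contractRight_apply,
        Representation.dual_apply, Module.Dual.transpose_apply, Representation.trivial_apply,
        ← Module.End.mul_apply, ← map_mul]
  | add x y hx hy => simp only [map_add, hx, hy]

/-- The evaluation map `ev : M ⊗_k M* → k`, `m ⊗ φ ↦ φ m`, as a homomorphism of
`kG`-modules (where `M ⊗_k M*` carries the diagonal `G`-action and `k` is trivial). -/
noncomputable def evHomG (ρ : Representation k G V) :
    (ρ.tprod ρ.dual).asModule →ₗ[MonoidAlgebra k G] Triv k G where
  toFun z := contractRight k V z
  map_add' := (contractRight k V).map_add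
  map_smul' a z := by
    show contractRight k V ((ρ.tprod ρ.dual).asAlgebraHom a z) =
      (trivRep k G).asAlgebraHom a (contractRight k V z)
    induction a using MonoidAlgebra.induction_on with
    | of g => simpa [Representation.asAlgebraHom_of] using ev_equivariant ρ g z
    | add a b ha hb =>
      simp only [map_add]
      first
        | erw [LinearMap.add_apply, map_add, ha, hb]
        | exact (congrArg _ (LinearMap.add_apply _ _ _)).trans
            ((map_add _ _ _).trans (congrArg₂ (· + ·) ha hb))
      rfl
    | smul r a ha =>
      simp only [map_smul]
      first
        | erw [LinearMap.smul_apply, map_smul, ha]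
        | exact (congrArg _ (LinearMap.smul_apply _ _ _)).trans
            ((map_smul _ _ _).trans (congrArg (r • ·) ha))
      rfl

theorem theta_equivariant (ρ : Representation k G V) (g : G) (z : V ⊗[k] Module.Dual k V) :
    ((dualTensorHom k V V).comp (TensorProduct.comm k V (Module.Dual k V)).toLinearMap)
        ((ρ.tprod ρ.dual) g z) =
      (ρ.linHom ρ) g (((dualTensorHom k V V).comp
        (TensorProduct.comm k V (Module.Dual k V)).toLinearMap) z) := by
  induction z using TensorProduct.induction_on with
  | zero => simp
  | tmul m φ =>
      ext m'
      simp [Representation.tprod_apply, dualTensorHom_apply,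
        Representation.dual_apply, Module.Dual.transpose_apply]
  | add x y hx hy => simp only [map_add, hx, hy]

/-- The natural map `θ_M : M ⊗_k M* → End_k M`, `θ (m ⊗ φ) m' = φ m' • m`, as a
homomorphism of `kG`-modules (where `End_k M` carries the conjugation `G`-action). -/
noncomputable def thetaHomG (ρ : Representation k G V) :
    (ρ.tprod ρ.dual).asModule →ₗ[MonoidAlgebra k G] (ρ.linHom ρ).asModule where
  toFun z := ((dualTensorHom k V V).comp
    (TensorProduct.comm k V (Module.Dual k V)).toLinearMap) z
  map_add' x y := map_add _ x y
  map_smul' a z := by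
    show ((dualTensorHom k V V).comp (TensorProduct.comm k V (Module.Dual k V)).toLinearMap)
        ((ρ.tprod ρ.dual).asAlgebraHom a z) =
      (ρ.linHom ρ).asAlgebraHom a (((dualTensorHom k V V).comp
        (TensorProduct.comm k V (Module.Dual k V)).toLinearMap) z)
    induction a using MonoidAlgebra.induction_on with
    | of g => simpa [Representation.asAlgebraHom_of] using theta_equivariant ρ g z
    | add a b ha hb =>
      simp only [map_add]
      first
        | erw [LinearMap.add_apply, map_add, ha, hb]
        | exact (congrArg _ (LinearMap.add_apply _ _ _)).trans
            ((map_add _ _ _).trans (congrArg₂ (· + ·) ha hb))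
      rfl
    | smul r a ha =>
      simp only [map_smul]
      first
        | erw [LinearMap.smul_apply, map_smul, ha]
        | exact (congrArg _ (LinearMap.smul_apply _ _ _)).trans
            ((map_smul _ _ _).trans (congrArg (r • ·) ha))
      rfl

/-- A representation is invertible (endotrivial) if there is a `kG`-module `N` such that
`M ⊗_k N` (with the diagonal `G`-action) is stably isomorphic to the trivial module `k`. -/
def IsInvertibleRep (ρ : Representation k G V) : Prop :=
  ∃ (W' : Type u) (_ : AddCommMonoid W') (_ : Module k W') (σ : Representation k G W'),
    StablyIsomorphic (MonoidAlgebra k G) (ρ.tprod σ).asModule (Triv k G)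

end Equivariant

section MapCoeff

variable (k : Type u) [CommRing k] (l : Type u) [CommRing l] (G : Type u) [Group G]

/-- The ring homomorphism `kG → ℓG` induced by a ring homomorphism `f : k → ℓ`
(applying `f` to the coefficients). -/
noncomputable def mapCoeffRingHom (f : k →+* l) :
    MonoidAlgebra k G →+* MonoidAlgebra l G :=
  letI : Algebra k l := f.toAlgebra
  ((MonoidAlgebra.lift k (MonoidAlgebra l G) G) (MonoidAlgebra.of l G)).toRingHom

end MapCoeff

section BaseChange

variable {k : Type u} [CommRing k] {G : Type u} [Group G]
  {V : Type u} [AddCommGroup V] [Module k V]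
  (A : Type u) [CommRing A] [Algebra k A]

/-- The base change `A ⊗_k V` of a representation along `k → A`. -/
noncomputable def repBaseChange (ρ : Representation k G V) :
    Representation A G (A ⊗[k] V) where
  toFun g := LinearMap.baseChange A (ρ g)
  map_one' := by ext; simp
  map_mul' g h := by ext; simp

end BaseChange


/-! ### Auxiliary lemmas -/

section PD

variable {R : Type u} [Ring R]

theorem pdle_zero {M : Type v} [AddCommMonoid M] [Module R M] (h : Module.Projective R M) :
    HasProjDimLE R 0 M := h

theorem pdle_congr : ∀ (n : ℕ) {M N : Type v} [AddCommMonoid M] [Module R M]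
    [AddCommMonoid N] [Module R N] (_ : M ≃ₗ[R] N),
    HasProjDimLE R n M → HasProjDimLE R n N
  | 0, M, N, _, _, _, _, e, h => by
    have : Module.Projective R M := h
    exact Module.Projective.of_equiv (N := N) e
  | n + 1, M, N, _, _, _, _, e, ⟨P, _, _, f, hP, hf, hker⟩ => by
    refine ⟨P, inferInstance, inferInstance, e.toLinearMap.comp f, hP,
      e.surjective.comp hf, ?_⟩
    have hk : LinearMap.ker (e.toLinearMap.comp f) = LinearMap.ker f :=
      LinearMap.ker_comp_of_ker_eq_bot f e.ker
    rw [hk]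
    exact hker

theorem pdle_of_projective : ∀ (n : ℕ) {M : Type v} [AddCommMonoid M] [Module R M]
    (_ : Module.Projective R M), HasProjDimLE R n M
  | 0, M, _, _, h => h
  | n + 1, M, _, _, h => by
    refine ⟨M, inferInstance, inferInstance, LinearMap.id, h, Function.surjective_id, ?_⟩
    have : Subsingleton (LinearMap.ker (LinearMap.id (R := R) (M := M))) := by
      rw [LinearMap.ker_id]
      infer_instance
    exact pdle_of_projective n inferInstance

/-- The obvious equivalence `ker (f ×ₗ g) ≃ ker f × ker g`. -/
noncomputable def kerProdMapEquiv {M N M' N' : Type v} [AddCommMonoid M] [Module R M]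
    [AddCommMonoid N] [Module R N] [AddCommMonoid M'] [Module R M']
    [AddCommMonoid N'] [Module R N'] (f : M →ₗ[R] M') (g : N →ₗ[R] N') :
    LinearMap.ker (f.prodMap g) ≃ₗ[R] LinearMap.ker f × LinearMap.ker g where
  toFun z := (⟨z.1.1, by
      have := z.2
      simp only [LinearMap.mem_ker, LinearMap.prodMap_apply, Prod.mk_eq_zero] at this
      exact this.1⟩,
      ⟨z.1.2, by
      have := z.2
      simp only [LinearMap.mem_ker, LinearMap.prodMap_apply, Prod.mk_eq_zero] at this
      exact this.2⟩)
  invFun p := ⟨(p.1.1, p.2.1), by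
      have h1 := p.1.2
      have h2 := p.2.2
      simp only [LinearMap.mem_ker] at h1 h2
      simp only [LinearMap.mem_ker, LinearMap.prodMap_apply, Prod.mk_eq_zero]
      exact ⟨h1, h2⟩⟩
  map_add' z w := rfl
  map_smul' a z := rfl
  left_inv z := rfl
  right_inv p := rfl

theorem pdle_prod : ∀ (n : ℕ) {M N : Type v} [AddCommMonoid M] [Module R M]
    [AddCommMonoid N] [Module R N],
    HasProjDimLE R n M → HasProjDimLE R n N → HasProjDimLE R n (M × N)
  | 0, M, N, _, _, _, _, hM, hN => by
    have : Module.Projective R M := hM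
    have : Module.Projective R N := hN
    exact (inferInstance : Module.Projective R (M × N))
  | n + 1, M, N, _, _, _, _, ⟨P, _, _, f, hP, hf, hkf⟩, ⟨Q, _, _, g, hQ, hg, hkg⟩ => by
    have : Module.Projective R P := hP
    have : Module.Projective R Q := hQ
    refine ⟨P × Q, inferInstance, inferInstance, f.prodMap g, inferInstance,
      hf.prodMap hg, ?_⟩
    exact pdle_congr n (kerProdMapEquiv f g).symm (pdle_prod n hkf hkg)

end PD

section PD2

variable {R : Type u} [Ring R]

/-- A split surjection onto `P` decomposes the source as `P × ker f`. -/
noncomputable def splitKerEquiv {X P : Type v} [AddCommGroup X] [Module R X]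
    [AddCommGroup P] [Module R P] (f : X →ₗ[R] P) (s : P →ₗ[R] X)
    (hs : f ∘ₗ s = LinearMap.id) : X ≃ₗ[R] P × LinearMap.ker f where
  toFun x := (f x, ⟨x - s (f x), by
    have hsa : f (s (f x)) = f x := DFunLike.congr_fun hs (f x)
    simp only [LinearMap.mem_ker, map_sub, hsa, sub_self]⟩)
  invFun p := s p.1 + p.2.1
  map_add' x y := by
    ext
    · simp
    · show (x + y) - s (f (x + y)) = (x - s (f x)) + (y - s (f y))
      rw [map_add, map_add]
      abel
  map_smul' a x := by
    ext
    · simp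
    · show a • x - s (f (a • x)) = a • (x - s (f x))
      rw [map_smul, map_smul, smul_sub]
  left_inv x := by
    show s (f x) + (x - s (f x)) = x
    abel
  right_inv p := by
    have h2 : f p.2.1 = 0 := p.2.2
    have hsa : ∀ y : P, f (s y) = y := fun y => DFunLike.congr_fun hs y
    have hf1 : f (s p.1 + p.2.1) = p.1 := by rw [map_add, hsa, h2, add_zero]
    ext
    · exact hf1
    · show s p.1 + p.2.1 - s (f (s p.1 + p.2.1)) = p.2.1
      rw [hf1]
      abel

theorem nonempty_splitKerEquiv {X P : Type v} [AddCommGroup X] [Module R X]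
    [AddCommMonoid P] [Module R P] [Module.Projective R P] (f : X →ₗ[R] P)
    (hf : Function.Surjective f) : Nonempty (X ≃ₗ[R] P × LinearMap.ker f) := by
  letI : AddCommGroup P := Module.addCommMonoidToAddCommGroup R
  obtain ⟨s, hs⟩ := Module.projective_lifting_property f LinearMap.id hf
  exact ⟨splitKerEquiv f s hs⟩

/-- Schanuel's lemma. -/
theorem schanuel {M P Q : Type u} [AddCommMonoid M] [Module R M] [AddCommMonoid P]
    [Module R P] [AddCommMonoid Q] [Module R Q] (hP : Module.Projective R P)
    (hQ : Module.Projective R Q) (f : P →ₗ[R] M) (g : Q →ₗ[R] M)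
    (hf : Function.Surjective f) (hg : Function.Surjective g) :
    Nonempty ((LinearMap.ker f × Q) ≃ₗ[R] (LinearMap.ker g × P)) := by
  letI : AddCommGroup P := Module.addCommMonoidToAddCommGroup R
  letI : AddCommGroup Q := Module.addCommMonoidToAddCommGroup R
  set X : Submodule R (P × Q) :=
    LinearMap.eqLocus (f ∘ₗ LinearMap.fst R P Q) (g ∘ₗ LinearMap.snd R P Q) with hX
  have memX : ∀ z : P × Q, z ∈ X ↔ f z.1 = g z.2 := fun z => Iff.rfl
  let π₁ : X →ₗ[R] P := LinearMap.fst R P Q ∘ₗ X.subtype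
  let π₂ : X →ₗ[R] Q := LinearMap.snd R P Q ∘ₗ X.subtype
  have hπ₁ : Function.Surjective π₁ := by
    intro p
    obtain ⟨q, hq⟩ := hg (f p)
    exact ⟨⟨(p, q), hq.symm⟩, rfl⟩
  have hπ₂ : Function.Surjective π₂ := by
    intro q
    obtain ⟨p, hp⟩ := hf (g q)
    exact ⟨⟨(p, q), hp⟩, rfl⟩
  let e₁ : LinearMap.ker π₁ ≃ₗ[R] LinearMap.ker g :=
    { toFun := fun z => ⟨z.1.1.2, by
        have h1 : (z.1 : P × Q).1 = 0 := z.2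
        have h2 : f z.1.1.1 = g z.1.1.2 := z.1.2
        simp only [LinearMap.mem_ker]
        rw [← h2, h1, map_zero]⟩
      invFun := fun y => ⟨⟨(0, y.1), by
        show f 0 = g y.1
        rw [map_zero, y.2]⟩, by
        show ((0 : P), (y.1 : Q)).1 = 0
        rfl⟩
      map_add' := fun z w => rfl
      map_smul' := fun a z => rfl
      left_inv := fun z => by
        have h1 : (z.1 : P × Q).1 = 0 := z.2
        ext
        · exact h1.symm
        · rfl
      right_inv := fun y => rfl }
  let e₂ : LinearMap.ker π₂ ≃ₗ[R] LinearMap.ker f :=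
    { toFun := fun z => ⟨z.1.1.1, by
        have h1 : (z.1 : P × Q).2 = 0 := z.2
        have h2 : f z.1.1.1 = g z.1.1.2 := z.1.2
        simp only [LinearMap.mem_ker]
        rw [h2, h1, map_zero]⟩
      invFun := fun y => ⟨⟨(y.1, 0), by
        show f y.1 = g 0
        rw [map_zero, y.2]⟩, by
        show ((y.1 : P), (0 : Q)).2 = 0
        rfl⟩
      map_add' := fun z w => rfl
      map_smul' := fun a z => rfl
      left_inv := fun z => by
        have h1 : (z.1 : P × Q).2 = 0 := z.2
        ext
        · rfl
        · exact h1.symm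
      right_inv := fun y => rfl }
  obtain ⟨u₁⟩ := nonempty_splitKerEquiv (R := R) (X := X) π₁ hπ₁
  obtain ⟨u₂⟩ := nonempty_splitKerEquiv (R := R) (X := X) π₂ hπ₂
  exact ⟨(((LinearEquiv.prodComm R _ _).trans
      ((LinearEquiv.refl R Q).prodCongr e₂.symm)).trans
      (u₂.symm.trans u₁)).trans
      (((LinearEquiv.refl R P).prodCongr e₁).trans
      (LinearEquiv.prodComm R _ _))⟩
end PD2

section PD3

variable {R : Type u} [Ring R]

/-- Projective dimension of a direct summand. -/
theorem pdle_of_split : ∀ (n : ℕ) {C S : Type u} [AddCommMonoid C] [Module R C]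
    [AddCommMonoid S] [Module R S] (i : C →ₗ[R] S) (p : S →ₗ[R] C)
    (_ : p ∘ₗ i = LinearMap.id), HasProjDimLE R n S → HasProjDimLE R n C
  | 0, C, S, _, _, _, _, i, p, hpi, hS => by
    have : Module.Projective R S := hS
    exact Module.Projective.of_split i p hpi
  | n + 1, C, S, _, _, _, _, i, p, hpi, ⟨P, _, _, f, hPproj, hf, hK⟩ => by
    letI : AddCommGroup S := Module.addCommMonoidToAddCommGroup R
    letI : AddCommGroup C := Module.addCommMonoidToAddCommGroup R
    haveI : Module.Projective R P := hPproj
    have hpia : ∀ c : C, p (i c) = c := fun c => DFunLike.congr_fun hpi c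
    -- the complement
    set C' : Submodule R S := LinearMap.ker p with hC'
    -- free covers of C and C'
    let q : (C →₀ R) →ₗ[R] C := Finsupp.linearCombination R id
    have hq : Function.Surjective q :=
      Finsupp.linearCombination_surjective R Function.surjective_id
    let q' : (C' →₀ R) →ₗ[R] C' := Finsupp.linearCombination R id
    have hq' : Function.Surjective q' :=
      Finsupp.linearCombination_surjective R Function.surjective_id
    -- combined cover of S
    let w : ((C →₀ R) × (C' →₀ R)) →ₗ[R] S :=
      (i ∘ₗ q).coprod (C'.subtype ∘ₗ q')
    have hw : Function.Surjective w := by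
      intro s
      obtain ⟨a, ha⟩ := hq (p s)
      obtain ⟨b, hb⟩ := hq' ⟨s - i (p s), by
        show p (s - i (p s)) = 0
        rw [map_sub, hpia, sub_self]⟩
      refine ⟨(a, b), ?_⟩
      show i (q a) + (q' b : S) = s
      rw [ha, hb]
      show i (p s) + (s - i (p s)) = s
      abel
    -- the kernel of the combined cover splits as a product
    let e₂ : LinearMap.ker w ≃ₗ[R] LinearMap.ker q × LinearMap.ker q' :=
      { toFun := fun z => by
          have hz : i (q z.1.1) + ((q' z.1.2 : C') : S) = 0 := z.2
          have hq0 : q z.1.1 = 0 := by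
            have := congrArg p hz
            simpa [hpia, (q' z.1.2).2] using this
          have hq'0 : q' z.1.2 = 0 := by
            rw [hq0, map_zero, zero_add] at hz
            exact Subtype.ext hz
          exact (⟨z.1.1, hq0⟩, ⟨z.1.2, hq'0⟩)
        invFun := fun y => ⟨(y.1.1, y.2.1), by
          show i (q y.1.1) + ((q' y.2.1 : C') : S) = 0
          rw [y.1.2, y.2.2, map_zero]
          simp⟩
        map_add' := fun z z' => rfl
        map_smul' := fun a z => rfl
        left_inv := fun z => rfl
        right_inv := fun y => rfl }
    -- Schanuel applied to the two covers of S
    obtain ⟨u⟩ := schanuel (M := S) inferInstance hPproj w f hw hf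
    -- `ker f × ((C →₀ R) × (C' →₀ R))` has projective dimension ≤ n
    have h1 : HasProjDimLE R n (LinearMap.ker f × ((C →₀ R) × (C' →₀ R))) :=
      pdle_prod n hK (pdle_of_projective n inferInstance)
    have h2 : HasProjDimLE R n (LinearMap.ker w × P) := pdle_congr n u.symm h1
    -- `ker q` is a summand of `ker w × P`
    let i₂ : LinearMap.ker q →ₗ[R] (LinearMap.ker w × P) :=
      (LinearMap.inl R _ P) ∘ₗ e₂.symm.toLinearMap ∘ₗ (LinearMap.inl R _ _)
    let p₂ : (LinearMap.ker w × P) →ₗ[R] LinearMap.ker q :=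
      (LinearMap.fst R _ _) ∘ₗ e₂.toLinearMap ∘ₗ (LinearMap.fst R _ P)
    have hcomp : p₂ ∘ₗ i₂ = LinearMap.id := by
      refine LinearMap.ext fun x => ?_
      show (e₂ (e₂.symm (x, 0))).1 = x
      rw [e₂.apply_symm_apply]
    have h3 : HasProjDimLE R n (LinearMap.ker q) := pdle_of_split n i₂ p₂ hcomp h2
    exact ⟨C →₀ R, inferInstance, inferInstance, q, inferInstance, hq, h3⟩

end PD3


/-! ### Coinduction from the trivial subgroup -/

section CoindAux

variable (k : Type u) [CommRing k] (H : Type u) [Group H]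

theorem CF_of_smul {N : Type u} [AddCommGroup N] [Module k N] (g : H)
    (ψ : (coindTrivRep k H N).asModule) :
    MonoidAlgebra.of k H g • ψ = ((fun x => (ψ : H → N) (x * g)) : H → N) := by
  show (coindTrivRep k H N).asAlgebraHom _ ψ = _
  rw [Representation.asAlgebraHom_of]
  rfl

/-- Functoriality of coinduction from the trivial subgroup. -/
noncomputable def CFmap {N N' : Type u} [AddCommGroup N] [Module k N]
    [AddCommGroup N'] [Module k N'] (f : N →ₗ[k] N') :
    (coindTrivRep k H N).asModule →ₗ[MonoidAlgebra k H] (coindTrivRep k H N').asModule :=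
  eqvToModule (coindTrivRep k H N) (coindTrivRep k H N') (f.compLeft H) (fun _ _ => rfl)

theorem CFmap_apply {N N' : Type u} [AddCommGroup N] [Module k N]
    [AddCommGroup N'] [Module k N'] (f : N →ₗ[k] N')
    (φ : (coindTrivRep k H N).asModule) (x : H) :
    (CFmap k H f φ : H → N') x = f ((φ : H → N) x) := rfl

theorem CFmap_surjective {N N' : Type u} [AddCommGroup N] [Module k N]
    [AddCommGroup N'] [Module k N'] (f : N →ₗ[k] N') (hf : Function.Surjective f) :
    Function.Surjective (CFmap k H f) := by
  intro ψ
  refine ⟨(fun x => Classical.choose (hf ((ψ : H → N') x)) : H → N), ?_⟩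
  funext x
  exact Classical.choose_spec (hf ((ψ : H → N') x))

/-- Coinduction preserves kernels. -/
noncomputable def kerCFEquiv {N N' : Type u} [AddCommGroup N] [Module k N]
    [AddCommGroup N'] [Module k N'] (f : N →ₗ[k] N') :
    ↥(LinearMap.ker (CFmap k H f)) ≃ₗ[MonoidAlgebra k H]
      (coindTrivRep k H ↥(LinearMap.ker f)).asModule := by
  let j := CFmap k H (LinearMap.ker f).subtype
  have hinj : Function.Injective j := by
    intro ψ ψ' h
    funext x
    exact Subtype.ext (congrFun h x)
  have hr : LinearMap.range j = LinearMap.ker (CFmap k H f) := by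
    ext φ
    simp only [LinearMap.mem_range, LinearMap.mem_ker]
    constructor
    · rintro ⟨ψ, rfl⟩
      funext x
      exact ((ψ : H → ↥(LinearMap.ker f)) x).2
    · intro h
      refine ⟨(fun x => ⟨(φ : H → N) x, ?_⟩ : H → ↥(LinearMap.ker f)), rfl⟩
      exact congrFun h x
  exact ((LinearEquiv.ofInjective j hinj).trans (LinearEquiv.ofEq _ _ hr)).symm

/-- Coinduction commutes with direct products. -/
noncomputable def CFpi (I : Type u) (N : I → Type u) [∀ i, AddCommGroup (N i)]
    [∀ i, Module k (N i)] :
    (∀ i, (coindTrivRep k H (N i)).asModule) ≃ₗ[MonoidAlgebra k H]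
      (coindTrivRep k H (∀ i, N i)).asModule where
  toFun φ := (fun x i => (φ i : H → N i) x : H → ∀ i, N i)
  invFun ψ := fun i => (fun x => (ψ : H → ∀ i, N i) x i : H → N i)
  map_add' φ φ' := rfl
  map_smul' a φ := by
    funext x i
    show ((coindTrivRep k H (N i)).asAlgebraHom a ((φ i : H → N i))) x
        = ((coindTrivRep k H (∀ i, N i)).asAlgebraHom a
            ((fun x i => (φ i : H → N i) x) : H → ∀ i, N i)) x i
    induction a using MonoidAlgebra.induction_on with
    | of g =>
      rw [Representation.asAlgebraHom_of, Representation.asAlgebraHom_of]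
      rfl
    | add a b ha hb =>
      simp only [map_add]
      exact congrArg₂ (· + ·) ha hb
    | smul r a ha =>
      simp only [map_smul]
      exact congrArg (r • ·) ha
  left_inv φ := rfl
  right_inv ψ := rfl

end CoindAux

section FreeCF

variable (k : Type u) [CommRing k] (H : Type u) [Group H]

/-- Packing a function `H → (S →₀ k)` (with `H` finite) into `S →₀ kH`. -/
noncomputable def packFinsupp [Finite H] {S : Type u} (ψ : H → (S →₀ k)) :
    S →₀ MonoidAlgebra k H :=
  haveI := Fintype.ofFinite H
  haveI := Classical.decEq S
  Finsupp.onFinset (Finset.univ.biUnion fun f : H => (ψ f).support)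
    (fun s => MonoidAlgebra.ofCoeff (Finsupp.equivFunOnFinite.symm fun f : H => ψ f⁻¹ s))
    (fun s hs => by
      by_contra hmem
      apply hs
      have hzero : ∀ f : H, ψ f⁻¹ s = 0 := by
        intro f
        by_contra hf
        exact hmem (Finset.mem_biUnion.2 ⟨f⁻¹, Finset.mem_univ _,
          Finsupp.mem_support_iff.2 hf⟩)
      ext f
      show ψ f⁻¹ s = 0
      simp [hzero f])

theorem packFinsupp_apply [Finite H] {S : Type u} (ψ : H → (S →₀ k)) (s : S) (f : H) :
    (packFinsupp k H ψ s).coeff f = ψ f⁻¹ s := by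
  show (Finsupp.equivFunOnFinite.symm fun f : H => ψ f⁻¹ s) f = _
  rfl

/-- The free `kH`-module on `S` is the module coinduced from the free `k`-module on `S`,
for `H` finite. -/
noncomputable def freeCFEquiv [Finite H] (S : Type u) :
    (S →₀ MonoidAlgebra k H) ≃ₗ[MonoidAlgebra k H]
      (coindTrivRep k H (S →₀ k)).asModule where
  toFun b := (fun f => b.mapRange (fun v : MonoidAlgebra k H => v.coeff f⁻¹) rfl : H → (S →₀ k))
  invFun ψ := packFinsupp k H (ψ : H → (S →₀ k))
  map_add' b b' := by
    funext f
    ext s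
    show ((b + b') s).coeff f⁻¹
      = (b.mapRange (fun v : MonoidAlgebra k H => v.coeff f⁻¹) rfl
          + b'.mapRange (fun v : MonoidAlgebra k H => v.coeff f⁻¹) rfl) s
    simp only [Finsupp.add_apply, Finsupp.mapRange_apply]
    rfl
  map_smul' a b := by
    funext f
    ext s
    show ((a • b) s).coeff f⁻¹
      = (((coindTrivRep k H (S →₀ k)).asAlgebraHom a
          ((fun f => b.mapRange (fun v : MonoidAlgebra k H => v.coeff f⁻¹) rfl) : H → (S →₀ k))) : H → (S →₀ k)) f s
    induction a using MonoidAlgebra.induction_on with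
    | of g =>
      rw [Representation.asAlgebraHom_of]
      show ((MonoidAlgebra.single g 1 • b) s).coeff f⁻¹ = (b s).coeff (f * g)⁻¹
      rw [Finsupp.smul_apply, smul_eq_mul, MonoidAlgebra.coeff_single_mul_apply, one_mul,
        mul_inv_rev]
    | add a a' ha ha' =>
      rw [map_add, LinearMap.add_apply, add_smul]
      show ((a • b + a' • b) s).coeff f⁻¹ = _
      rw [Finsupp.add_apply, MonoidAlgebra.coeff_add, Finsupp.add_apply, ha, ha']
      rfl
    | smul r a ha =>
      rw [map_smul, LinearMap.smul_apply]
      show (((r • a) • b) s).coeff f⁻¹ = (r • ((coindTrivRep k H (S →₀ k)).asAlgebraHom a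
          ((fun f => b.mapRange (fun v : MonoidAlgebra k H => v.coeff f⁻¹) rfl) : H → (S →₀ k))) : H → (S →₀ k)) f s
      rw [smul_assoc]
      show ((r • (a • b)) s).coeff f⁻¹ = _
      rw [Finsupp.smul_apply, MonoidAlgebra.coeff_smul_apply, ha]
      rfl
  left_inv b := by
    ext s f
    rw [packFinsupp_apply]
    show (b s).coeff f⁻¹⁻¹ = (b s).coeff f
    rw [inv_inv]
  right_inv ψ := by
    funext f
    ext s
    show (packFinsupp k H ψ s).coeff f⁻¹ = _
    exact (packFinsupp_apply k H _ s f⁻¹).trans (by rw [inv_inv])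

/-- Coinduction sends projective `k`-modules to projective `kH`-modules, `H` finite. -/
theorem CF_projective [Finite H] {N : Type u} [AddCommGroup N] [Module k N]
    (hN : Module.Projective k N) :
    Module.Projective (MonoidAlgebra k H) (coindTrivRep k H N).asModule := by
  obtain ⟨s, hs⟩ := Module.projective_def'.mp hN
  haveI : Module.Projective (MonoidAlgebra k H) (coindTrivRep k H (N →₀ k)).asModule :=
    Module.Projective.of_equiv (freeCFEquiv k H N)
  refine Module.Projective.of_split (CFmap k H s)
    (CFmap k H (Finsupp.linearCombination k _root_.id)) ?_
  refine LinearMap.ext fun φ => ?_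
  funext x
  show Finsupp.linearCombination k _root_.id (s ((φ : H → N) x)) = (φ : H → N) x
  exact DFunLike.congr_fun hs ((φ : H → N) x)

/-- Coinduction does not increase projective dimension (`H` finite). -/
theorem pdle_CF [Finite H] : ∀ (n : ℕ) (N : Type u) [AddCommGroup N] [Module k N],
    HasProjDimLE k n N →
      HasProjDimLE (MonoidAlgebra k H) n ((coindTrivRep k H N).asModule)
  | 0, N, _, _, hN => CF_projective k H hN
  | n + 1, N, _, _, ⟨Q, _, _, f, hQ, hf, hker⟩ => by
    letI : AddCommGroup Q := Module.addCommMonoidToAddCommGroup k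
    refine ⟨(coindTrivRep k H Q).asModule, inferInstance, inferInstance, CFmap k H f,
      CF_projective k H hQ, CFmap_surjective k H f hf, ?_⟩
    exact pdle_congr n (kerCFEquiv k H f).symm (pdle_CF n (LinearMap.ker f) hker)

end FreeCF

section CosetDecomp

variable (k : Type u) [CommRing k] (G : Type u) [Group G] (F : Subgroup G)

/-- The type of right cosets `F\G`. -/
noncomputable abbrev RCoset : Type u := Quotient (QuotientGroup.rightRel F)

theorem out_mul_inv_mem (g : G) :
    (⟦g⟧ : RCoset G F).out * g⁻¹ ∈ F := by
  have h1 : (⟦(⟦g⟧ : RCoset G F).out⟧ : RCoset G F) = ⟦g⟧ := Quotient.out_eq _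
  have h2 := Quotient.exact h1
  have h3 : g * ((⟦g⟧ : RCoset G F).out)⁻¹ ∈ F := QuotientGroup.rightRel_apply.mp h2
  simpa using F.inv_mem h3

/-- `kG`, as a `kF`-module, is the coinduction of the free `k`-module on `F\G`. -/
noncomputable def toCosetFun (a : MonoidAlgebra k G) :
    (coindTrivRep k (↥F) ((RCoset G F) →₀ k)).asModule :=
  (fun f : ↥F => Finsupp.comapDomain (fun c : RCoset G F => (↑f)⁻¹ * c.out) a.coeff
    (((mul_right_injective ((↑f)⁻¹ : G)).comp Quotient.out_injective).injOn)
    : ↥F → ((RCoset G F) →₀ k))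

theorem toCosetFun_apply (a : MonoidAlgebra k G) (f : ↥F) (c : RCoset G F) :
    ((toCosetFun k G F a : ↥F → ((RCoset G F) →₀ k)) f) c = a.coeff ((↑f)⁻¹ * c.out) :=
  Finsupp.comapDomain_apply _ _ _ _

/-- Inverse of `toCosetFun`, for `F` finite. -/
noncomputable def fromCosetFun [Finite ↥F]
    (ψ : (coindTrivRep k (↥F) ((RCoset G F) →₀ k)).asModule) : MonoidAlgebra k G :=
  haveI := Fintype.ofFinite ↥F
  haveI := Classical.decEq G
  MonoidAlgebra.ofCoeff <| Finsupp.onFinset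
    (Finset.univ.biUnion fun f : ↥F =>
      (((ψ : ↥F → ((RCoset G F) →₀ k)) f).support.image fun c : RCoset G F => (↑f)⁻¹ * c.out))
    (fun g => (ψ : ↥F → ((RCoset G F) →₀ k)) ⟨(⟦g⟧ : RCoset G F).out * g⁻¹,
        out_mul_inv_mem G F g⟩ ⟦g⟧)
    (fun g hg => by
      refine Finset.mem_biUnion.2 ⟨⟨(⟦g⟧ : RCoset G F).out * g⁻¹, out_mul_inv_mem G F g⟩,
        Finset.mem_univ _, Finset.mem_image.2 ⟨⟦g⟧, Finsupp.mem_support_iff.2 hg, ?_⟩⟩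
      show ((⟦g⟧ : RCoset G F).out * g⁻¹)⁻¹ * (⟦g⟧ : RCoset G F).out = g
      group)

theorem fromCosetFun_apply [Finite ↥F]
    (ψ : (coindTrivRep k (↥F) ((RCoset G F) →₀ k)).asModule) (g : G) :
    (fromCosetFun k G F ψ).coeff g = (ψ : ↥F → ((RCoset G F) →₀ k))
      ⟨(⟦g⟧ : RCoset G F).out * g⁻¹, out_mul_inv_mem G F g⟩ ⟦g⟧ := rfl

/-- `kG` as a `kF`-module is coinduced from the free `k`-module on the right cosets,
provided `F` is finite. -/
noncomputable def kgCFEquiv [Finite ↥F] :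
    MonoidAlgebra k G ≃ₗ[MonoidAlgebra k ↥F]
      (coindTrivRep k (↥F) ((RCoset G F) →₀ k)).asModule where
  toFun := toCosetFun k G F
  invFun := fromCosetFun k G F
  map_add' a a' := by
    funext f
    ext c
    show ((a + a').coeff ((↑f)⁻¹ * c.out))
      = ((toCosetFun k G F a : ↥F → ((RCoset G F) →₀ k)) f
          + (toCosetFun k G F a' : ↥F → ((RCoset G F) →₀ k)) f) c
    simp only [Finsupp.add_apply, toCosetFun_apply]
    rfl
  map_smul' b a := by
    funext f
    ext c
    show ((subgroupInclusion k G F b * a).coeff ((↑f)⁻¹ * c.out))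
      = (((coindTrivRep k (↥F) ((RCoset G F) →₀ k)).asAlgebraHom b
          (toCosetFun k G F a)) : ↥F → ((RCoset G F) →₀ k)) f c
    induction b using MonoidAlgebra.induction_on with
    | of g =>
      rw [Representation.asAlgebraHom_of]
      show ((subgroupInclusion k G F (MonoidAlgebra.single g 1) * a).coeff ((↑f)⁻¹ * c.out))
        = ((toCosetFun k G F a : ↥F → ((RCoset G F) →₀ k)) (f * g)) c
      have hsub : subgroupInclusion k G F (MonoidAlgebra.single g 1)
          = MonoidAlgebra.single (↑g : G) 1 := by
        show MonoidAlgebra.mapDomain (⇑F.subtype) (MonoidAlgebra.single g 1) = _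
        rw [MonoidAlgebra.mapDomain_single]
        rfl
      rw [hsub, MonoidAlgebra.coeff_single_mul_apply, one_mul, toCosetFun_apply]
      congr 1
      show (↑g)⁻¹ * ((↑f)⁻¹ * c.out) = (↑(f * g))⁻¹ * c.out
      push_cast
      group
    | add b b' hb hb' =>
      rw [map_add, map_add, add_mul]
      show ((subgroupInclusion k G F b * a + subgroupInclusion k G F b' * a).coeff ((↑f)⁻¹ * c.out)) = _
      rw [MonoidAlgebra.coeff_add, Finsupp.add_apply]
      rw [hb, hb']
      rfl
    | smul r b hb =>
      have hsm : subgroupInclusion k G F (r • b) = r • subgroupInclusion k G F b := by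
        show MonoidAlgebra.mapDomain (⇑F.subtype) (r • b) = r • MonoidAlgebra.mapDomain (⇑F.subtype) b
        exact MonoidAlgebra.mapDomain_smul _ r b
      rw [hsm, map_smul, smul_mul_assoc]
      show ((r • (subgroupInclusion k G F b * a)).coeff ((↑f)⁻¹ * c.out)) = _
      rw [MonoidAlgebra.coeff_smul_apply]
      rw [hb]
      rfl
  left_inv a := by
    ext g
    rw [fromCosetFun_apply, toCosetFun_apply]
    congr 1
    show ((⟦g⟧ : RCoset G F).out * g⁻¹)⁻¹ * (⟦g⟧ : RCoset G F).out = g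
    group
  right_inv ψ := by
    funext f
    ext c
    rw [toCosetFun_apply, fromCosetFun_apply]
    set g₀ : G := (↑f)⁻¹ * c.out with hg₀
    have hc2 : (⟦g₀⟧ : RCoset G F) = c := by
      rw [← Quotient.out_eq c]
      refine Quotient.sound (QuotientGroup.rightRel_apply.mpr ?_)
      have : c.out * g₀⁻¹ = ↑f := by rw [hg₀]; group
      rw [this]
      exact f.2
    have hout : (⟦g₀⟧ : RCoset G F).out = c.out := by rw [hc2]
    have hxf : (⟨(⟦g₀⟧ : RCoset G F).out * g₀⁻¹, out_mul_inv_mem G F g₀⟩ : ↥F) = f :=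
      Subtype.ext (by
        show (⟦g₀⟧ : RCoset G F).out * g₀⁻¹ = ↑f
        rw [hout, hg₀]
        group)
    rw [hxf, hc2]

end CosetDecomp

section RestrictProj

variable (k : Type u) [CommRing k] (G : Type u) [Group G] (F : Subgroup G) [Finite ↥F]

/-- `kG` is free as a `kF`-module when `F` is finite. -/
noncomputable def kgFreeEquiv :
    MonoidAlgebra k G ≃ₗ[MonoidAlgebra k ↥F] ((RCoset G F) →₀ MonoidAlgebra k ↥F) :=
  (kgCFEquiv k G F).trans (freeCFEquiv k (↥F) (RCoset G F)).symm

/-- The restriction of a projective `kG`-module to `kF` is projective, for `F` finite. -/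
theorem restrict_projective (M : Type u) [AddCommGroup M]
    [Module (MonoidAlgebra k G) M] (hM : Module.Projective (MonoidAlgebra k G) M) :
    letI := restrictToSubgroup k G F M
    Module.Projective (MonoidAlgebra k ↥F) M := by
  letI := restrictToSubgroup k G F M
  obtain ⟨s, hs⟩ := Module.projective_def'.mp hM
  let s' : M →ₗ[MonoidAlgebra k ↥F] (M →₀ MonoidAlgebra k G) :=
    { toFun := s
      map_add' := s.map_add
      map_smul' := fun b m => by
        show s (subgroupInclusion k G F b • m) = b • s m
        rw [s.map_smul]
        ext j
        rw [Finsupp.smul_apply, Finsupp.smul_apply]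
        rfl }
  let t' : (M →₀ MonoidAlgebra k G) →ₗ[MonoidAlgebra k ↥F] M :=
    { toFun := Finsupp.linearCombination (MonoidAlgebra k G) _root_.id
      map_add' := map_add _
      map_smul' := fun b x => by
        show Finsupp.linearCombination (MonoidAlgebra k G) _root_.id (b • x)
          = subgroupInclusion k G F b • Finsupp.linearCombination (MonoidAlgebra k G) _root_.id x
        have hbx : (b • x : M →₀ MonoidAlgebra k G) = subgroupInclusion k G F b • x := by
          ext j
          rw [Finsupp.smul_apply, Finsupp.smul_apply]
          rfl
        rw [hbx, map_smul] }
  have hsplit : t' ∘ₗ s' = LinearMap.id := LinearMap.ext fun m => DFunLike.congr_fun hs m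
  have e1 : (M →₀ MonoidAlgebra k G) ≃ₗ[MonoidAlgebra k ↥F]
      (M →₀ ((RCoset G F) →₀ MonoidAlgebra k ↥F)) :=
    Finsupp.mapRange.linearEquiv (kgFreeEquiv k G F)
  have e2 : (M →₀ ((RCoset G F) →₀ MonoidAlgebra k ↥F)) ≃ₗ[MonoidAlgebra k ↥F]
      ((M × RCoset G F) →₀ MonoidAlgebra k ↥F) :=
    (Finsupp.finsuppProdLEquiv (MonoidAlgebra k ↥F)).symm
  haveI : Module.Projective (MonoidAlgebra k ↥F) (M →₀ MonoidAlgebra k G) :=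
    Module.Projective.of_equiv (e1.trans e2).symm
  exact Module.Projective.of_split s' t' hsplit

end RestrictProj

/-- Let `G` be a group of type `Φ_k` and let `(P_i)_{i ∈ I}` be any family of
projective `kG`-modules.  Then the direct product `∏_{i ∈ I} P_i` has finite projective
dimension over `kG`. -/
theorem product_of_projectives_hasFinProjDim
    (k : Type u) [CommRing k] [IsNoetherianRing k] (hk : ∃ d, GlobalDimLE k d)
    (G : Type u) [Group G] (hG : IsTypePhi k G)
    (I : Type u) (P : I → Type u)
    (instAP : ∀ i, AddCommGroup (P i)) (instMP : ∀ i, Module (MonoidAlgebra k G) (P i))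
    (hP : ∀ i, Module.Projective (MonoidAlgebra k G) (P i)) :
    HasFinProjDim (MonoidAlgebra k G) (∀ i, P i) := by
  obtain ⟨d, hd⟩ := hk
  letI : ∀ i, AddCommGroup (P i) := instAP
  letI : ∀ i, Module (MonoidAlgebra k G) (P i) := instMP
  refine (hG (∀ i, P i) inferInstance inferInstance).mpr ?_
  intro F hF
  haveI : Finite ↥F := hF
  letI := restrictToSubgroup k G F (∀ i, P i)
  show HasFinProjDim (MonoidAlgebra k ↥F) (∀ i, P i)
  letI instRF : ∀ i, Module (MonoidAlgebra k ↥F) (P i) :=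
    fun i => restrictToSubgroup k G F (P i)
  have hPF : ∀ i, Module.Projective (MonoidAlgebra k ↥F) (P i) :=
    fun i => restrict_projective k G F (P i) (hP i)
  choose sF hsF using fun i => Module.projective_def'.mp (hPF i)
  let bigI : (∀ i, P i) →ₗ[MonoidAlgebra k ↥F] (∀ i, (P i →₀ MonoidAlgebra k ↥F)) :=
    { toFun := fun φ i => sF i (φ i)
      map_add' := fun φ φ' => funext fun i => (sF i).map_add (φ i) (φ' i)
      map_smul' := fun b φ => funext fun i => (sF i).map_smul b (φ i) }
  let bigT : (∀ i, (P i →₀ MonoidAlgebra k ↥F)) →ₗ[MonoidAlgebra k ↥F] (∀ i, P i) :=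
    { toFun := fun x i => Finsupp.linearCombination (MonoidAlgebra k ↥F) _root_.id (x i)
      map_add' := fun x y => funext fun i => map_add _ (x i) (y i)
      map_smul' := fun b x => funext fun i =>
        map_smul (Finsupp.linearCombination (MonoidAlgebra k ↥F) _root_.id) b (x i) }
  have hbig : bigT ∘ₗ bigI = LinearMap.id :=
    LinearMap.ext fun φ => funext fun i => DFunLike.congr_fun (hsF i) (φ i)
  have hN : HasProjDimLE k d (∀ i, (P i →₀ k)) := hd _ _ _
  have h1 : HasProjDimLE (MonoidAlgebra k ↥F) d
      ((coindTrivRep k (↥F) (∀ i, (P i →₀ k))).asModule) := pdle_CF k (↥F) d _ hN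
  have h2 : HasProjDimLE (MonoidAlgebra k ↥F) d
      (∀ i, (coindTrivRep k (↥F) ((P i) →₀ k)).asModule) :=
    pdle_congr d (CFpi k (↥F) I (fun i => (P i) →₀ k)).symm h1
  have h3 : HasProjDimLE (MonoidAlgebra k ↥F) d (∀ i, ((P i) →₀ MonoidAlgebra k ↥F)) :=
    pdle_congr d (LinearEquiv.piCongrRight fun i => (freeCFEquiv k (↥F) (P i)).symm) h2
  exact ⟨d, pdle_of_split d bigI bigT hbig h3⟩
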